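/- Optimistic set, absence case: for every interpretation ℓ of logical variables and every configuration (s, (E,R), G_node) satisfying the loop invariant LI and the invariant (in particular INV_ALG(i)–(iv), INV_ORD and INV_WF(i),(ii) below, which together imply that a node n belongs to dom(s) iff insOf(E,n) is defined), if curr.val > arg(E(myEid)) — the current node's value is strictly greater than the argument of the current contains event myEid — then there is no event i with E(i) = (_, insert, arg(E(myEid)), true) such that lastRemOf(E, arg(E(myEid))) R i R myEid; i.e., no successful insert of that value lies strictly between the last successful remove of that value and the current contains in the real-time order. -/
import Mathlib


/-- Operations of the Optimistic set. -/
inductive SOp where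
  | ins
  | rem
  | cont
deriving DecidableEq

/-- A node of the Optimistic set's linked list. -/
structure SNode (NodeID Val : Type) where
  val : Val
  marked : Bool
  next : NodeID

/-- A configuration of the Optimistic set: the heap of nodes `dom(s)`, an
abstract history `(E, R)` whose events have operations `insert`/`remove`/
`contains`, value arguments and boolean results (`none` = `todo`), and the
ghost map `G_node` from event identifiers to node identifiers. -/
structure OSConfig (NodeID EventID Val : Type) where
  nodes : Set NodeID
  node : NodeID → SNode NodeID Val
  ids : Set EventID
  op : EventID → SOp
  arg : EventID → Val
  res : EventID → Option Bool
  rt : EventID → EventID → Prop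
  Gnode : EventID → Option NodeID

variable {NodeID EventID Val : Type}

/-- `n ⇝_s n'`: reachability along `next`-pointers. -/
def reach (κ : OSConfig NodeID EventID Val) (n n' : NodeID) : Prop :=
  Relation.ReflTransGen (fun a b => (κ.node a).next = b) n n'

/-- `insOf(E, n) = e`: `e` is the insert event associated with node `n`. -/
def IsInsOf (κ : OSConfig NodeID EventID Val) (n : NodeID) (e : EventID) : Prop :=
  e ∈ κ.ids ∧ κ.op e = SOp.ins ∧ κ.Gnode e = some n

/-- `remOf(E, n) = e`: `e` is the remove event associated with node `n`. -/
def IsRemOf (κ : OSConfig NodeID EventID Val) (n : NodeID) (e : EventID) : Prop :=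
  e ∈ κ.ids ∧ κ.op e = SOp.rem ∧ κ.Gnode e = some n

/-- The loop invariant `LI` of `locate` as called from the `contains`
operation `myEid` with current node `curr`: for every node `n'` holding the
sought value, if `n'` is reachable from `curr` then it is unmarked or its
remove is concurrent with `myEid`; if `n'` is unreachable from `curr` then it
is marked or its insert is concurrent with `myEid`. -/
def LoopInv (κ : OSConfig NodeID EventID Val) (curr : NodeID)
    (myEid : EventID) : Prop :=
  ∀ n' : NodeID,
    (reach κ curr n' → (κ.node n').val = κ.arg myEid →
      ((κ.node n').marked = false ∨
        ∀ r, IsRemOf κ n' r → ¬ κ.rt r myEid)) ∧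
    (¬ reach κ curr n' → (κ.node n').val = κ.arg myEid →
      ((κ.node n').marked = true ∨
        ∀ e, IsInsOf κ n' e → ¬ κ.rt e myEid))

/-- The parts of the Optimistic-set invariant used in the `contains` lemmas:
history well-formedness, `INV_ORD`, `INV_ALG(i)`, `INV_ALG(ii)`,
`INV_WF(i)` and `INV_WF(ii)`. -/
def OSInvariant (κ : OSConfig NodeID EventID Val) : Prop :=
  -- R transitive and irreflexive, uncompleted events maximal
  (∀ a b c, κ.rt a b → κ.rt b c → κ.rt a c) ∧
  (∀ a, ¬ κ.rt a a) ∧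
  (∀ i ∈ κ.ids, κ.res i = none → ∀ j, ¬ κ.rt i j) ∧
  -- INV_ORD: distinct completed insert and remove events are linearly ordered
  (∀ e e', e ∈ κ.ids → e' ∈ κ.ids → e ≠ e' →
    κ.res e ≠ none → κ.res e' ≠ none →
    κ.op e ≠ SOp.cont → κ.op e' ≠ SOp.cont →
    (κ.rt e e' ∨ κ.rt e' e)) ∧
  -- INV_ALG(i)
  (∀ n ∈ κ.nodes, (κ.node n).marked = false →
    (∃ e, IsInsOf κ n e) ∧ (¬ ∃ r, IsRemOf κ n r) ∧
    (∀ e i, IsInsOf κ n e → κ.rt e i → κ.res i = some true →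
      κ.op i = SOp.cont)) ∧
  -- INV_ALG(ii)
  (∀ n ∈ κ.nodes, (κ.node n).marked = true →
    (∃ e, IsInsOf κ n e) ∧ (∃ r, IsRemOf κ n r) ∧
    (∀ e r i, IsInsOf κ n e → IsRemOf κ n r →
      κ.rt e i → κ.rt i r → κ.res i = some true → κ.op i = SOp.cont)) ∧
  -- INV_WF(i): an event returned true iff it has an associated node
  (∀ e ∈ κ.ids, (κ.res e = some true ↔ κ.Gnode e ≠ none)) ∧
  -- INV_WF(ii): the argument of an event is the value of its node
  (∀ e n, κ.Gnode e = some n → κ.arg e = (κ.node n).val)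

/-- `lastRemOf(E, v) = r`: `r` is the `R`-last successful remove event with
argument `v`. -/
def IsLastRemOf (κ : OSConfig NodeID EventID Val) (v : Val) (r : EventID) : Prop :=
  r ∈ κ.ids ∧ κ.op r = SOp.rem ∧ κ.arg r = v ∧ κ.res r = some true ∧
  ∀ r', r' ∈ κ.ids → κ.op r' = SOp.rem → κ.arg r' = v →
    κ.res r' = some true → r' ≠ r → κ.rt r' r

/-- **Optimistic set, absence case (Lemma B.2 of the paper).** In every
configuration satisfying the loop invariant and the invariant (in particular
`INV_ALG(i)`–`(iv)`, `INV_ORD` and `INV_WF(i)`,`(ii)`, which together imply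
that a node belongs to `dom(s)` iff its insert event is defined), if the
current node's value is strictly greater than the argument of the current
`contains` event `myEid`, then no successful insert of that value lies
strictly between the last successful remove of that value and `myEid` in the
real-time order. -/
theorem optimistic_set_absence_case
    {NodeID EventID Val : Type} [LinearOrder Val]
    (κ : OSConfig NodeID EventID Val)
    (hinv : OSInvariant κ)
    -- INV_ALG(iii): values appear in ascending order along next-pointers
    (hALGiii : ∀ n n', reach κ n n' → (κ.node n).val ≤ (κ.node n').val)
    -- INV_ALG(iv): the insert of a node precedes its remove
    (hALGiv : ∀ n e r, IsInsOf κ n e → IsRemOf κ n r → κ.rt e r)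
    -- nodes in the heap are exactly those with an insert event
    (hdom : ∀ n, n ∈ κ.nodes ↔ ∃ e, IsInsOf κ n e)
    (curr : NodeID) (hcurr : curr ∈ κ.nodes)
    (myEid : EventID)
    (hmy : myEid ∈ κ.ids ∧ κ.op myEid = SOp.cont)
    (hLI : LoopInv κ curr myEid)
    (lastRem : EventID)
    (hlast : IsLastRemOf κ (κ.arg myEid) lastRem)
    (hval : κ.arg myEid < (κ.node curr).val) :
    ¬ ∃ i, i ∈ κ.ids ∧ κ.op i = SOp.ins ∧ κ.arg i = κ.arg myEid ∧
      κ.res i = some true ∧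
      κ.rt lastRem i ∧ κ.rt i myEid := by
  rintro ⟨i, hiIds, hiOp, hiArg, hiRes, hLastI, hIMy⟩
  obtain ⟨htrans, hirr, _, _, _, hALGii, hWFi, hWFii⟩ := hinv
  -- i has an associated node n
  have hGn : κ.Gnode i ≠ none := (hWFi i hiIds).1 hiRes
  obtain ⟨n, hGn⟩ : ∃ n, κ.Gnode i = some n := by
    cases h : κ.Gnode i with
    | none => exact absurd h hGn
    | some n => exact ⟨n, rfl⟩
  have hnval : (κ.node n).val = κ.arg myEid := by
    rw [← hWFii i n hGn, hiArg]
  have hIns : IsInsOf κ n i := ⟨hiIds, hiOp, hGn⟩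
  have hnNodes : n ∈ κ.nodes := (hdom n).2 ⟨i, hIns⟩
  by_cases hreach : reach κ curr n
  · exact absurd (hnval ▸ hALGiii curr n hreach) (not_le.2 hval)
  · rcases (hLI n).2 hreach hnval with hmarked | hno
    · -- n marked: has a remove r
      obtain ⟨_, ⟨r, hr⟩, _⟩ := hALGii n hnNodes hmarked
      have hir : κ.rt i r := hALGiv n i r hIns hr
      obtain ⟨hrIds, hrOp, hGr⟩ := hr
      have hrRes : κ.res r = some true :=
        (hWFi r hrIds).2 (by rw [hGr]; simp)
      have hrArg : κ.arg r = κ.arg myEid := by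
        rw [hWFii r n hGr, hnval]
      by_cases hrl : r = lastRem
      · exact hirr lastRem (htrans _ _ _ hLastI (hrl ▸ hir))
      · have := hlast.2.2.2.2 r hrIds hrOp hrArg hrRes hrl
        exact hirr lastRem (htrans _ _ _ (htrans _ _ _ hLastI hir) this)
    · exact hno i hIns hIMy
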